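/- Fix λ ⊢ n and a tableau T of shape λ with content {1,...,n}. Then the generalized higher Specht polynomials {F_{M,T} : M semistandard of shape λ with entry sum d} are linearly independent over ℚ. -/

import Mathlib

open MvPolynomial

noncomputable section
open scoped Classical

namespace GHS

def entrySumF (μ : YoungDiagram) (f : ℕ → ℕ → ℕ) : ℕ := ∑ c ∈ μ.cells, f c.1 c.2

def entryFun {μ : YoungDiagram} (M : SemistandardYoungTableau μ) : ℕ → ℕ → ℕ := fun r c => M r c

def entrySum {μ : YoungDiagram} (M : SemistandardYoungTableau μ) : ℕ := entrySumF μ (entryFun M)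

def entryMultisetF (μ : YoungDiagram) (f : ℕ → ℕ → ℕ) : Multiset ℕ :=
  μ.cells.val.map fun c => f c.1 c.2

def entryMultiset {μ : YoungDiagram} (M : SemistandardYoungTableau μ) : Multiset ℕ := entryMultisetF μ (entryFun M)

def countLtF (μ : YoungDiagram) (f : ℕ → ℕ → ℕ) (h : ℕ) : ℕ :=
  (μ.cells.filter fun c => f c.1 c.2 < h).card

def countGe {μ : YoungDiagram} (M : SemistandardYoungTableau μ) (t : ℕ) : ℕ :=
  (μ.cells.filter fun c => t ≤ M c.1 c.2).card

def maxEntryF (μ : YoungDiagram) (f : ℕ → ℕ → ℕ) : ℕ := μ.cells.sup fun c => f c.1 c.2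

def DspCF (n : ℕ) (μ : YoungDiagram) (f : ℕ → ℕ → ℕ) : Multiset ℕ :=
  (Finset.Icc 1 (maxEntryF μ f)).val.map fun h => n - countLtF μ f h

def DspC (n : ℕ) {μ : YoungDiagram} (M : SemistandardYoungTableau μ) : Multiset ℕ := DspCF n μ (entryFun M)

def stdFun (μ : YoungDiagram) (f : ℕ → ℕ → ℕ) : ℕ → ℕ → ℕ := fun r c =>
  if (r, c) ∈ μ then
    (μ.cells.filter fun c' => f c'.1 c'.2 < f r c ∨ (f c'.1 c'.2 = f r c ∧ c'.2 < c)).card + 1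
  else 0

def IsStandard (n : ℕ) {μ : YoungDiagram} (S : SemistandardYoungTableau μ) : Prop :=
  entryMultiset S = (Multiset.range n).map (· + 1)

def rowOfF (f : ℕ → ℕ → ℕ) (v : ℕ) : ℕ := sInf {r | ∃ c, f r c = v}

def DsiSet (n : ℕ) {μ : YoungDiagram} (S : SemistandardYoungTableau μ) : Finset ℕ :=
  (Finset.Ioo 0 n).filter fun i => rowOfF (entryFun S) i < rowOfF (entryFun S) (i + 1)

def jseq (n k : ℕ) (J : Multiset ℕ) (h : ℕ) : ℕ :=
  if h = 0 then 0 else if h = k then n else (J.sort (· ≤ ·)).getD (h - 1) 0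

def compFun (n k : ℕ) (J : Multiset ℕ) (h : ℕ) : ℕ := jseq n k J (h + 1) - jseq n k J h

def compMap (n k : ℕ) (J : Multiset ℕ) : Fin k → ℕ := fun h => compFun n k J (h : ℕ)

def contentOfJ (n k : ℕ) (J : Multiset ℕ) : Multiset ℕ :=
  (Multiset.range k).bind fun h => Multiset.replicate (compFun n k J h) h

def IsTabloid (n : ℕ) (μ : YoungDiagram) (T : Fin n → ℕ × ℕ) : Prop :=
  Function.Injective T ∧ ∀ i, T i ∈ μ

def IsStdFill (n : ℕ) (T : Fin n → ℕ × ℕ) : Prop :=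
  ∀ i j : Fin n,
    (((T i).1 = (T j).1 ∧ (T i).2 < (T j).2) ∨ ((T i).2 = (T j).2 ∧ (T i).1 < (T j).1)) → i < j

def rowGroup (n : ℕ) (T : Fin n → ℕ × ℕ) : Finset (Equiv.Perm (Fin n)) :=
  Finset.univ.filter fun τ => ∀ i, (T (τ i)).1 = (T i).1

def colGroup (n : ℕ) (T : Fin n → ℕ × ℕ) : Finset (Equiv.Perm (Fin n)) :=
  Finset.univ.filter fun σ => ∀ i, (T (σ i)).2 = (T i).2

def pmonF (n : ℕ) (f : ℕ → ℕ → ℕ) (T : Fin n → ℕ × ℕ) : MvPolynomial (Fin n) ℚ :=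
  ∏ i, X i ^ f (T i).1 (T i).2

def pexpF (n : ℕ) (f : ℕ → ℕ → ℕ) (T : Fin n → ℕ × ℕ) : Fin n →₀ ℕ :=
  Finsupp.equivFunOnFinite.symm fun i => f (T i).1 (T i).2

def symRT (n : ℕ) (T : Fin n → ℕ × ℕ) (p : MvPolynomial (Fin n) ℚ) : MvPolynomial (Fin n) ℚ :=
  ∑ τ ∈ rowGroup n T, rename (⇑τ) p

def antisym (n : ℕ) (T : Fin n → ℕ × ℕ) (p : MvPolynomial (Fin n) ℚ) : MvPolynomial (Fin n) ℚ :=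
  ∑ σ ∈ colGroup n T, ((Equiv.Perm.sign σ : ℤ) : ℚ) • rename (⇑σ) p

def youngSym (n : ℕ) (T : Fin n → ℕ × ℕ) (p : MvPolynomial (Fin n) ℚ) : MvPolynomial (Fin n) ℚ :=
  antisym n T (symRT n T p)

def stabCardF (n : ℕ) (f : ℕ → ℕ → ℕ) (T : Fin n → ℕ × ℕ) : ℕ :=
  ((rowGroup n T).filter fun τ : Equiv.Perm (Fin n) => rename (⇑τ) (pmonF n f T) = pmonF n f T).card

def rowPoly (n : ℕ) (f : ℕ → ℕ → ℕ) (T : Fin n → ℕ × ℕ) : MvPolynomial (Fin n) ℚ :=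
  (stabCardF n f T : ℚ)⁻¹ • symRT n T (pmonF n f T)

def FMTF (n : ℕ) (f : ℕ → ℕ → ℕ) (T : Fin n → ℕ × ℕ) : MvPolynomial (Fin n) ℚ :=
  (stabCardF n f T : ℚ)⁻¹ • youngSym n T (pmonF n f T)

def FMT (n : ℕ) {μ : YoungDiagram} (M : SemistandardYoungTableau μ) (T : Fin n → ℕ × ℕ) : MvPolynomial (Fin n) ℚ :=
  FMTF n (entryFun M) T

def degT (n : ℕ) (T : Fin n → ℕ × ℕ) (d : Fin n →₀ ℕ) (j : ℕ) : ℕ :=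
  ∑ i ∈ Finset.univ.filter fun i => (T i).2 = j, d i

def gtT (n : ℕ) (T : Fin n → ℕ × ℕ) (d e : Fin n →₀ ℕ) : Prop :=
  ∃ j, degT n T e j < degT n T d j ∧ ∀ j', j < j' → degT n T d j' = degT n T e j'

def VMF (n : ℕ) (μ : YoungDiagram) (f : ℕ → ℕ → ℕ) : Submodule ℚ (MvPolynomial (Fin n) ℚ) :=
  Submodule.span ℚ {p | ∃ T, IsTabloid n μ T ∧ p = FMTF n f T}

def VM (n : ℕ) {μ : YoungDiagram} (M : SemistandardYoungTableau μ) : Submodule ℚ (MvPolynomial (Fin n) ℚ) :=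
  VMF n μ (entryFun M)

def spechtP (n : ℕ) (T : Fin n → ℕ × ℕ) : MvPolynomial (Fin n) ℚ := ∏ i, X i ^ (T i).1

def SpechtSub (n : ℕ) (μ : YoungDiagram) : Submodule ℚ (MvPolynomial (Fin n) ℚ) :=
  Submodule.span ℚ {p | ∃ T, IsTabloid n μ T ∧ p = youngSym n T (spechtP n T)}

def EqHoms (n : ℕ) (W V : Submodule ℚ (MvPolynomial (Fin n) ℚ)) :
    Submodule ℚ (W →ₗ[ℚ] MvPolynomial (Fin n) ℚ) where
  carrier := {g | (∀ x, g x ∈ V) ∧ ∀ (σ : Equiv.Perm (Fin n)) (x y : W),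
      (y : MvPolynomial (Fin n) ℚ) = rename (⇑σ) (x : MvPolynomial (Fin n) ℚ) →
      g y = rename (⇑σ) (g x)}
  add_mem' := by
    rintro a b ⟨ha1, ha2⟩ ⟨hb1, hb2⟩
    refine ⟨fun x => ?_, fun σ x y hxy => ?_⟩
    · simpa using V.add_mem (ha1 x) (hb1 x)
    · simp [LinearMap.add_apply, map_add, ha2 σ x y hxy, hb2 σ x y hxy]
  zero_mem' := ⟨fun x => by simp, fun σ x y hxy => by simp⟩
  smul_mem' := by
    rintro c a ⟨ha1, ha2⟩
    refine ⟨fun x => ?_, fun σ x y hxy => ?_⟩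
    · simpa using V.smul_mem c (ha1 x)
    · simp [LinearMap.smul_apply, map_smul, ha2 σ x y hxy]

def multiplicityIn (n : ℕ) (W V : Submodule ℚ (MvPolynomial (Fin n) ℚ)) : ℕ :=
  Module.finrank ℚ ↑(EqHoms n W V)

def contentSub (n : ℕ) (μc : Multiset ℕ) : Submodule ℚ (MvPolynomial (Fin n) ℚ) :=
  Submodule.span ℚ {p | ∃ d : Fin n → ℕ, Finset.univ.val.map d = μc ∧ p = ∏ i, X i ^ d i}

def padded (n : ℕ) (μc : Multiset ℕ) : Multiset ℕ :=
  μc + Multiset.replicate (n - Multiset.card μc) 0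

def IsCocharge {μ : YoungDiagram} (C : SemistandardYoungTableau μ) : Prop :=
  ∀ h : ℕ, 0 < h → ∀ v ∈ μ.cells, C v.1 v.2 = h →
    (∀ v' ∈ μ.cells, C v'.1 v'.2 = h → v.2 ≤ v'.2) →
    ∃ v'' ∈ μ.cells, C v''.1 v''.2 = h - 1 ∧ v''.1 < v.1

def updF (f : ℕ → ℕ → ℕ) (r c v : ℕ) : ℕ → ℕ → ℕ :=
  fun r' c' => if r' = r ∧ c' = c then v else f r' c'

def slide : ℕ → (ℕ → ℕ → ℕ) → ℕ × ℕ → (ℕ → ℕ → ℕ) × (ℕ × ℕ)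
  | 0, f, p => (f, p)
  | fuel + 1, f, (r, c) =>
    let down := f (r + 1) c
    let right := f r (c + 1)
    if down = 0 ∧ right = 0 then (f, (r, c))
    else if right = 0 ∨ (down ≠ 0 ∧ down < right) then
      slide fuel (updF (updF f r c down) (r + 1) c 0) (r + 1, c)
    else
      slide fuel (updF (updF f r c right) r (c + 1) 0) (r, c + 1)

def evacAux : ℕ → (ℕ → ℕ → ℕ) → ℕ → ℕ → ℕ
  | 0, _ => fun _ _ => 0
  | m + 1, f =>
    let gp := slide (m + 1) (updF f 0 0 0) (0, 0)
    updF (evacAux m gp.1) gp.2.1 gp.2.2 (m + 1)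

def ctJfun (J : Multiset ℕ) (f : ℕ → ℕ → ℕ) : ℕ → ℕ → ℕ :=
  fun r c => J.countP fun j => j < f r c

def JminF (μ : YoungDiagram) (f : ℕ → ℕ → ℕ) : Multiset ℕ :=
  (Finset.Icc 1 (maxEntryF μ f)).val.map fun h => countLtF μ f h

def deltaOne (n : ℕ) (μ : YoungDiagram) (f : ℕ → ℕ → ℕ) (v : ℕ × ℕ) : Prop :=
  ¬ (rowOfF (evacAux n (stdFun μ f)) n < v.1)

def hatAdd (n : ℕ) (μ : YoungDiagram) (f : ℕ → ℕ → ℕ) (v : ℕ × ℕ) : ℕ → ℕ → ℕ :=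
  let Sv := evacAux (n + 1) (updF (evacAux n (stdFun μ f)) v.1 v.2 (n + 1))
  let Jp : Multiset ℕ := (JminF μ f).map (· + 1)
  if deltaOne n μ f v then ctJfun Jp Sv else ctJfun (1 ::ₘ Jp) Sv

def iotaHatFun (f : ℕ → ℕ → ℕ) : ℕ → ℕ → ℕ :=
  fun r c => if r = 0 then (if c = 0 then 0 else f 0 (c - 1)) else f r c

def iotaT (n : ℕ) (lam : YoungDiagram) (T : Fin n → ℕ × ℕ) : Fin (n + 1) → ℕ × ℕ :=
  fun i => if h : (i : ℕ) < n then T ⟨(i : ℕ), h⟩ else (0, lam.rowLen 0)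

def plusOneF (μ : YoungDiagram) (f : ℕ → ℕ → ℕ) : ℕ → ℕ → ℕ :=
  fun r c => if (r, c) ∈ μ then f r c + 1 else 0

def Omega (n : ℕ) (α : ℕ → ℕ) :=
  {w : Fin n → ℕ // ∀ h, (Finset.univ.filter fun i => w i = h).card = α h}

def shiftW (n : ℕ) (α : ℕ → ℕ) (σ : Equiv.Perm (Fin n)) (w : Omega n α) : Omega n α :=
  ⟨fun i => w.1 (σ.symm i), by
    intro h
    have key : (Finset.univ.filter fun i => w.1 (σ.symm i) = h)
        = (Finset.univ.filter fun i => w.1 i = h).image σ := by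
      ext i
      simp only [Finset.mem_filter, Finset.mem_univ, true_and, Finset.mem_image]
      constructor
      · intro hi
        exact ⟨σ.symm i, hi, Equiv.apply_symm_apply σ i⟩
      · rintro ⟨j, hj, rfl⟩
        simpa using hj
    rw [key, Finset.card_image_of_injective _ σ.injective]
    exact w.2 h⟩

def permOmega (n : ℕ) (α : ℕ → ℕ) (σ : Equiv.Perm (Fin n)) : Omega n α ≃ Omega n α where
  toFun := shiftW n α σ
  invFun := shiftW n α σ⁻¹
  left_inv w := by
    apply Subtype.ext
    funext i
    simp [shiftW, Equiv.Perm.inv_def]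
  right_inv w := by
    apply Subtype.ext
    funext i
    simp [shiftW, Equiv.Perm.inv_def]

def ExtPart (n d : ℕ) : Submodule ℚ (MvPolynomial (Fin (n + 1)) ℚ) :=
  ⨆ (lam : YoungDiagram) (_ : lam.card = n) (M : SemistandardYoungTableau lam) (_ : entrySum M = d)
    (v : ℕ × ℕ) (_ : v ∉ lam.cells) (ν : YoungDiagram) (_ : ν.cells = insert v lam.cells)
    (_ : deltaOne n lam (entryFun M) v),
    VMF (n + 1) ν (hatAdd n lam (entryFun M) v)

def LEPart (n d : ℕ) : Submodule ℚ (MvPolynomial (Fin (n + 1)) ℚ) :=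
  ⨆ (lam : YoungDiagram) (_ : lam.card = n) (M : SemistandardYoungTableau lam) (_ : entrySum M + n = d)
    (v : ℕ × ℕ) (_ : v ∉ lam.cells) (ν : YoungDiagram) (_ : ν.cells = insert v lam.cells)
    (_ : ¬ deltaOne n lam (entryFun M) v),
    VMF (n + 1) ν (hatAdd n lam (entryFun M) v)

def EPart (n d : ℕ) : Submodule ℚ (MvPolynomial (Fin (n + 1)) ℚ) :=
  ⨆ (e : ℕ) (_ : e + (n + 1) = d),
    (homogeneousSubmodule (Fin (n + 1)) ℚ e).map
      (LinearMap.mulLeft ℚ (∏ i : Fin (n + 1), (X i : MvPolynomial (Fin (n + 1)) ℚ)))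


/-! Compare exponent vectors through their tail degrees `j ↦ ∑_{col(i) ≥ j} e_i`, ordered
pointwise. Every monomial of `ε_T p_{M',T}` is `στ · p_{M',T}` with `σ` a column and `τ` a row
permutation. Column permutations keep the tail degrees; since `M'` is weakly increasing along
rows, row permutations can only lower them, and keep them only when `τ` fixes `p_{M',T}`. As the
columns of a semistandard tableau are strictly increasing, `σ · p_{M',T} = p_{M,T}` then forces
`M = M'`, and `σ = 1` when `M = M'`. So `x^{p_{M,T}}` occurs in `F_{M',T}` only if `M = M'` or
`p_{M,T}` has strictly smaller tail degrees, and its coefficient in `F_{M,T}` is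
`#Stab / s_{M,T} = 1`: the family is triangular. -/

open Finset

theorem _root_.linearIndependent_of_triangular {ι R M α : Type*} [Ring R] [NoZeroDivisors R]
    [AddCommGroup M] [Module R M] [PartialOrder α] (v : ι → M) (φ : ι → M →ₗ[R] R)
    (w : ι → α) (hdiag : ∀ i, φ i (v i) ≠ 0) (htri : ∀ i j, φ i (v j) ≠ 0 → i = j ∨ w i < w j) :
    LinearIndependent R v := by
  rw [linearIndependent_iff]
  intro l hl
  by_contra hl0
  obtain ⟨m, hm, hmax⟩ := l.support.exists_maximalFor w (Finsupp.support_nonempty_iff.mpr hl0)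
  have hφ : φ m (Finsupp.linearCombination R v l) = l m * φ m (v m) := by
    rw [Finsupp.linearCombination_apply, map_finsuppSum]
    refine (Finset.sum_eq_single m (fun j hj hjm => ?_) (fun h => absurd hm h)).trans (by simp)
    simp only [map_smul, smul_eq_mul]
    by_contra hne
    rcases htri m j (right_ne_zero_of_mul hne) with rfl | hlt
    · exact hjm rfl
    · exact hlt.not_ge (hmax hj hlt.le)
  rw [hl, map_zero, eq_comm, mul_eq_zero] at hφ
  exact hφ.elim (Finsupp.mem_support_iff.mp hm) (hdiag m)

theorem _root_.Finset.sum_le_sum_of_card_eq {ι M : Type*} [DecidableEq ι] [AddCommMonoid M]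
    [LinearOrder M] [IsOrderedCancelAddMonoid M] {s t : Finset ι} {v : ι → M} (hcard : #s = #t)
    (h : ∀ i ∈ s \ t, ∀ j ∈ t \ s, v i ≤ v j) : ∑ i ∈ s, v i ≤ ∑ i ∈ t, v i := by
  rw [← sum_sdiff_le_sum_sdiff]
  rcases (t \ s).eq_empty_or_nonempty with he | hne
  · rw [card_eq_zero.mp ((card_sdiff_comm hcard).trans (card_eq_zero.mpr he)), he]
  obtain ⟨b, hb, hbmin⟩ := exists_min_image (t \ s) v hne
  calc ∑ i ∈ s \ t, v i ≤ #(s \ t) • v b := sum_le_card_nsmul _ _ _ fun i hi => h i hi b hb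
    _ = #(t \ s) • v b := by rw [card_sdiff_comm hcard]
    _ ≤ ∑ i ∈ t \ s, v i := card_nsmul_le_sum _ _ _ hbmin

section TailDegree

variable {ι : Type*} [Fintype ι] (T : ι → ℕ × ℕ)

def tailDeg (e : ι → ℕ) (j : ℕ) : ℕ :=
  ∑ i with j ≤ (T i).2, e i

def rowTail (r j : ℕ) : Finset ι :=
  {i | (T i).1 = r ∧ j ≤ (T i).2}

def MonotoneAlongRows (v : ι → ℕ) : Prop :=
  ∀ i i', (T i).1 = (T i').1 → (T i).2 ≤ (T i').2 → v i ≤ v i'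

variable {T}

lemma tailDeg_comp_symm (τ : Equiv.Perm ι) (e : ι → ℕ) :
    tailDeg T (e ∘ τ.symm) = tailDeg (T ∘ τ) e := by
  funext j
  exact sum_equiv τ.symm (by simp) (by simp)

lemma tailDeg_comp_of_col {σ : Equiv.Perm ι} (hσ : ∀ i, (T (σ i)).2 = (T i).2) (e : ι → ℕ) :
    tailDeg (T ∘ σ) e = tailDeg T e := by
  funext j
  simp only [tailDeg, Function.comp_apply, hσ]

lemma tailDeg_eq_sum_rowTail {t : Finset ℕ} (ht : ∀ i, (T i).1 ∈ t) (e : ι → ℕ) (j : ℕ) :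
    tailDeg T e j = ∑ r ∈ t, ∑ i ∈ rowTail T r j, e i := by
  rw [tailDeg, ← sum_fiberwise_of_maps_to (g := fun i => (T i).1) (t := t) fun i _ => ht i]
  simp only [rowTail, filter_filter, and_comm]

lemma rowTail_eq_insert (hT : Function.Injective T) (i : ι) :
    rowTail T (T i).1 (T i).2 = insert i (rowTail T (T i).1 ((T i).2 + 1)) := by
  ext k
  simp only [rowTail, mem_filter, mem_univ, true_and, mem_insert]
  constructor
  · rintro ⟨hr, hc⟩
    rcases hc.eq_or_lt with hc | hc
    · exact .inl (hT (Prod.ext hr hc.symm))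
    · exact .inr ⟨hr, hc⟩
  · rintro (rfl | ⟨hr, hc⟩)
    · exact ⟨rfl, le_rfl⟩
    · exact ⟨hr, by omega⟩

lemma notMem_rowTail_succ (i : ι) : i ∉ rowTail T (T i).1 ((T i).2 + 1) := by
  simp [rowTail]

variable {τ : Equiv.Perm ι} {v : ι → ℕ}

lemma sum_rowTail_comp_le (hτ : ∀ i, (T (τ i)).1 = (T i).1) (hv : MonotoneAlongRows T v)
    (r j : ℕ) : ∑ i ∈ rowTail (T ∘ τ) r j, v i ≤ ∑ i ∈ rowTail T r j, v i := by
  apply sum_le_sum_of_card_eq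
  · have : rowTail (T ∘ τ) r j = (rowTail T r j).map τ.symm.toEmbedding := by
      ext i
      simp [rowTail]
    rw [this, card_map]
  · intro i hi i' hi'
    simp only [rowTail, mem_sdiff, mem_filter, mem_univ, true_and, Function.comp_apply, hτ,
      not_and, not_le] at hi hi'
    exact hv i i' (hi.1.1.trans hi'.1.1.symm) ((hi.2 hi.1.1).le.trans hi'.1.2)

lemma tailDeg_comp_le (hτ : ∀ i, (T (τ i)).1 = (T i).1) (hv : MonotoneAlongRows T v) :
    tailDeg (T ∘ τ) v ≤ tailDeg T v := by
  have ht : ∀ i, (T i).1 ∈ univ.image fun i => (T i).1 := fun i => mem_image_of_mem _ (mem_univ i)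
  intro j
  rw [tailDeg_eq_sum_rowTail (fun i => (hτ i).symm ▸ ht i), tailDeg_eq_sum_rowTail ht]
  exact sum_le_sum fun r _ => sum_rowTail_comp_le hτ hv r j

lemma comp_eq_of_tailDeg_comp_eq (hT : Function.Injective T) (hτ : ∀ i, (T (τ i)).1 = (T i).1)
    (hv : MonotoneAlongRows T v) (h : tailDeg (T ∘ τ) v = tailDeg T v) : v ∘ τ = v := by
  have ht : ∀ i, (T i).1 ∈ univ.image fun i => (T i).1 := fun i => mem_image_of_mem _ (mem_univ i)
  have hrow : ∀ i j, ∑ k ∈ rowTail (T ∘ τ) (T i).1 j, v k = ∑ k ∈ rowTail T (T i).1 j, v k := by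
    intro i j
    have hj := congrFun h j
    rw [tailDeg_eq_sum_rowTail (fun i => (hτ i).symm ▸ ht i), tailDeg_eq_sum_rowTail ht] at hj
    exact (sum_eq_sum_iff_of_le fun r _ => sum_rowTail_comp_le hτ hv r j).mp hj _ (ht i)
  -- compare the row sums over the columns `≥ c` and `≥ c + 1`, where `c` is the column of `τ i`
  funext i
  have hc := hrow (τ i) (T (τ i)).2
  rw [rowTail_eq_insert hT, sum_insert (notMem_rowTail_succ _), ← hrow (τ i)] at hc
  rw [show T (τ i) = (T ∘ τ) i from rfl, rowTail_eq_insert (hT.comp τ.injective),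
    sum_insert (notMem_rowTail_succ (T := T ∘ τ) _), Function.comp_apply] at hc
  exact (Nat.add_right_cancel hc).symm

lemma tailDeg_le_of_comp_row_col {σ : Equiv.Perm ι} {u : ι → ℕ} (hT : Function.Injective T)
    (hσ : ∀ i, (T (σ i)).2 = (T i).2) (hτ : ∀ i, (T (τ i)).1 = (T i).1)
    (hv : MonotoneAlongRows T v) (h : v ∘ τ.symm ∘ σ.symm = u) :
    tailDeg T u ≤ tailDeg T v ∧ (tailDeg T u = tailDeg T v → v ∘ τ.symm = v) := by
  have hu : tailDeg T u = tailDeg (T ∘ τ) v := by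
    rw [← h, ← Function.comp_assoc, tailDeg_comp_symm, tailDeg_comp_of_col hσ,
      tailDeg_comp_symm]
  refine ⟨hu ▸ tailDeg_comp_le hτ hv, fun heq => ?_⟩
  have hfix := comp_eq_of_tailDeg_comp_eq hT hτ hv (hu ▸ heq)
  conv_lhs => rw [← hfix]
  ext i
  simp

end TailDegree

section Tableau

variable {n : ℕ} {μ : YoungDiagram} {T : Fin n → ℕ × ℕ}

lemma IsTabloid.exists_apply_eq (hT : IsTabloid n μ T) (hcard : μ.card = n) :
    ∀ v ∈ μ, ∃ i, T i = v := by
  intro v hv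
  obtain ⟨i, -, hi⟩ := Finset.surjOn_of_injOn_of_card_le (s := univ) (t := μ.cells) T
    (fun i _ => (μ.mem_cells _).mpr (hT.2 i)) hT.1.injOn (by simp [hcard])
    ((μ.mem_cells v).mpr hv)
  exact ⟨i, hi⟩

lemma pexpF_entryFun_apply (M : SemistandardYoungTableau μ) (i : Fin n) :
    pexpF n (entryFun M) T i = M (T i).1 (T i).2 := by
  simp [pexpF, entryFun]

lemma monotoneAlongRows_pexpF (hT : IsTabloid n μ T) (M : SemistandardYoungTableau μ) :
    MonotoneAlongRows T (pexpF n (entryFun M) T) := by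
  intro i i' hr hc
  simp only [pexpF_entryFun_apply, hr]
  exact M.row_weak_of_le hc (hT.2 i')

lemma _root_.SemistandardYoungTableau.eq_of_col_eq_of_entry_eq (M : SemistandardYoungTableau μ)
    {v w : ℕ × ℕ} (hv : v ∈ μ) (hw : w ∈ μ) (hc : v.2 = w.2) (h : M v.1 v.2 = M w.1 w.2) :
    v = w := by
  obtain ⟨r, c⟩ := v
  obtain ⟨r', c'⟩ := w
  dsimp only at hc h
  subst hc
  rcases lt_trichotomy r r' with hlt | rfl | hgt
  · exact absurd h (M.col_strict hlt hw).ne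
  · rfl
  · exact absurd h (M.col_strict hgt hv).ne'

lemma eq_one_of_pexpF_comp_col (hT : IsTabloid n μ T) (M : SemistandardYoungTableau μ)
    {σ : Equiv.Perm (Fin n)} (hσ : ∀ i, (T (σ i)).2 = (T i).2)
    (h : pexpF n (entryFun M) T ∘ σ.symm = pexpF n (entryFun M) T) : σ = 1 := by
  have hfix : ∀ i, σ.symm i = i := fun i => by
    have hc : (T (σ.symm i)).2 = (T i).2 := by simpa using (hσ (σ.symm i)).symm
    have he := congrFun h i
    simp only [Function.comp_apply, pexpF_entryFun_apply] at he
    exact hT.1 (M.eq_of_col_eq_of_entry_eq (hT.2 _) (hT.2 i) hc he)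
  exact Equiv.ext fun i => by simpa using (hfix (σ i)).symm

lemma eq_of_pexpF_comp_col (hT : IsTabloid n μ T) (hcard : μ.card = n)
    {M M' : SemistandardYoungTableau μ} {σ : Equiv.Perm (Fin n)}
    (hσ : ∀ i, (T (σ i)).2 = (T i).2)
    (h : pexpF n (entryFun M') T ∘ σ.symm = pexpF n (entryFun M) T) : M = M' := by
  have hcol : ∀ (N : SemistandardYoungTableau μ) (c : ℕ),
      Set.range (fun r : Fin (μ.colLen c) => N r c)
        = pexpF n (entryFun N) T '' {i | (T i).2 = c} := by
    intro N c
    ext x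
    simp only [Set.mem_range, Set.mem_image, Set.mem_ofPred_eq, pexpF_entryFun_apply]
    constructor
    · rintro ⟨r, rfl⟩
      obtain ⟨i, hi⟩ := hT.exists_apply_eq hcard (r, c) (YoungDiagram.mem_iff_lt_colLen.mpr r.2)
      exact ⟨i, by rw [hi], by rw [hi]⟩
    · rintro ⟨i, rfl, rfl⟩
      exact ⟨⟨(T i).1, YoungDiagram.mem_iff_lt_colLen.mp (hT.2 i)⟩, rfl⟩
  have hcolSet : ∀ c, σ.symm '' {i | (T i).2 = c} = {i | (T i).2 = c} := by
    intro c
    ext i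
    simp [Equiv.image_symm_eq_preimage, hσ]
  have hmono : ∀ (N : SemistandardYoungTableau μ) (c : ℕ),
      StrictMono fun r : Fin (μ.colLen c) => N r c :=
    fun N c a b hab => N.col_strict hab (YoungDiagram.mem_iff_lt_colLen.mpr b.2)
  ext r c
  by_cases hrc : (r, c) ∈ μ
  · have hcolEq := (StrictMono.range_inj (hmono M c) (hmono M' c)).mp
      (by rw [hcol, hcol, ← h, Set.image_comp, hcolSet])
    exact congrFun hcolEq ⟨r, YoungDiagram.mem_iff_lt_colLen.mp hrc⟩
  · rw [M.zeros hrc, M'.zeros hrc]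

end Tableau

section Coefficients

variable {n : ℕ}

lemma mem_rowGroup {T : Fin n → ℕ × ℕ} {τ : Equiv.Perm (Fin n)} :
    τ ∈ rowGroup n T ↔ ∀ i, (T (τ i)).1 = (T i).1 := by
  simp [rowGroup]

lemma mem_colGroup {T : Fin n → ℕ × ℕ} {σ : Equiv.Perm (Fin n)} :
    σ ∈ colGroup n T ↔ ∀ i, (T (σ i)).2 = (T i).2 := by
  simp [colGroup]

lemma coe_mapDomain_perm {ι : Type*} (σ : Equiv.Perm ι) (e : ι →₀ ℕ) :
    ⇑(Finsupp.mapDomain σ e) = e ∘ σ.symm :=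
  funext fun i => Finsupp.mapDomain_equiv_apply e i

lemma mapDomain_perm_eq_iff {ι : Type*} (σ : Equiv.Perm ι) (e e' : ι →₀ ℕ) :
    Finsupp.mapDomain σ e = e' ↔ e ∘ σ.symm = e' := by
  rw [← DFunLike.coe_fn_eq, coe_mapDomain_perm]

lemma pmonF_eq_monomial (f : ℕ → ℕ → ℕ) (T : Fin n → ℕ × ℕ) :
    pmonF n f T = monomial (pexpF n f T) 1 := by
  rw [monomial_eq, C_1, one_mul, Finsupp.prod_fintype _ _ fun _ => pow_zero _]
  simp [pmonF, pexpF]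

lemma stabCardF_eq (f : ℕ → ℕ → ℕ) (T : Fin n → ℕ × ℕ) :
    stabCardF n f T = #{τ ∈ rowGroup n T | pexpF n f T ∘ τ.symm = pexpF n f T} := by
  unfold stabCardF
  congr 1
  refine filter_congr fun τ _ => ?_
  rw [pmonF_eq_monomial, rename_monomial, (monomial_left_injective one_ne_zero).eq_iff,
    mapDomain_perm_eq_iff]

lemma coeff_FMTF (f : ℕ → ℕ → ℕ) (T : Fin n → ℕ × ℕ) (e : Fin n →₀ ℕ) :
    coeff e (FMTF n f T) = (stabCardF n f T : ℚ)⁻¹ *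
      ∑ σ ∈ colGroup n T, ∑ τ ∈ rowGroup n T, ((Equiv.Perm.sign σ : ℤ) : ℚ) *
        if pexpF n f T ∘ τ.symm ∘ σ.symm = e then 1 else 0 := by
  rw [FMTF, youngSym, symRT, antisym, coeff_smul, smul_eq_mul, coeff_sum]
  congr 1
  refine sum_congr rfl fun σ _ => ?_
  rw [coeff_smul, map_sum, coeff_sum, smul_eq_mul, mul_sum]
  refine sum_congr rfl fun τ _ => ?_
  rw [pmonF_eq_monomial, rename_monomial, rename_monomial, coeff_monomial]
  simp only [mapDomain_perm_eq_iff, coe_mapDomain_perm, Function.comp_assoc]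

lemma exists_of_coeff_FMTF_ne_zero {f : ℕ → ℕ → ℕ} {T : Fin n → ℕ × ℕ} {e : Fin n →₀ ℕ}
    (h : coeff e (FMTF n f T) ≠ 0) :
    ∃ σ ∈ colGroup n T, ∃ τ ∈ rowGroup n T, pexpF n f T ∘ τ.symm ∘ σ.symm = e := by
  rw [coeff_FMTF] at h
  obtain ⟨σ, hσ, hs⟩ := exists_ne_zero_of_sum_ne_zero (right_ne_zero_of_mul h)
  obtain ⟨τ, hτ, ht⟩ := exists_ne_zero_of_sum_ne_zero hs
  exact ⟨σ, hσ, τ, hτ, by_contra fun hne => ht (by simp [hne])⟩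

end Coefficients

variable {n : ℕ} {μ : YoungDiagram} {T : Fin n → ℕ × ℕ}

lemma coeff_FMT_self (hT : IsTabloid n μ T) (M : SemistandardYoungTableau μ) :
    coeff (pexpF n (entryFun M) T) (FMT n M T) = 1 := by
  have hσ_eq_one : ∀ σ ∈ colGroup n T, ∀ τ ∈ rowGroup n T,
      pexpF n (entryFun M) T ∘ τ.symm ∘ σ.symm = pexpF n (entryFun M) T → σ = 1 := by
    intro σ hσ τ hτ h
    have hfix := (tailDeg_le_of_comp_row_col hT.1 (mem_colGroup.mp hσ) (mem_rowGroup.mp hτ)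
      (monotoneAlongRows_pexpF hT M) h).2 rfl
    refine eq_one_of_pexpF_comp_col hT M (mem_colGroup.mp hσ) ?_
    calc pexpF n (entryFun M) T ∘ σ.symm
        = (pexpF n (entryFun M) T ∘ τ.symm) ∘ σ.symm := by rw [hfix]
      _ = pexpF n (entryFun M) T := h
  rw [FMT, coeff_FMTF, sum_eq_single_of_mem 1 (mem_colGroup.mpr fun _ => rfl)]
  · have hstab : (stabCardF n (entryFun M) T : ℚ) ≠ 0 := by
      rw [stabCardF_eq, Nat.cast_ne_zero]
      exact card_ne_zero_of_mem (a := 1) (mem_filter.mpr ⟨by simp [rowGroup], rfl⟩)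
    simp only [Equiv.Perm.sign_one, Units.val_one, Int.cast_one, one_mul, ← Equiv.Perm.inv_def,
      Equiv.Perm.coe_inv, inv_one, Equiv.Perm.coe_one, Function.comp_id, sum_boole]
    rw [← stabCardF_eq, inv_mul_cancel₀ hstab]
  · intro σ hσ hσ1
    exact sum_eq_zero fun τ hτ => by rw [if_neg fun h => hσ1 (hσ_eq_one σ hσ τ hτ h), mul_zero]

lemma eq_or_tailDeg_lt_of_coeff_FMT_ne_zero (hT : IsTabloid n μ T) (hcard : μ.card = n)
    {M M' : SemistandardYoungTableau μ}
    (h : coeff (pexpF n (entryFun M) T) (FMT n M' T) ≠ 0) :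
    M = M' ∨ tailDeg T (pexpF n (entryFun M) T) < tailDeg T (pexpF n (entryFun M') T) := by
  obtain ⟨σ, hσ, τ, hτ, hστ⟩ := exists_of_coeff_FMTF_ne_zero h
  obtain ⟨hle, hfix⟩ := tailDeg_le_of_comp_row_col hT.1 (mem_colGroup.mp hσ) (mem_rowGroup.mp hτ)
    (monotoneAlongRows_pexpF hT M') hστ
  refine hle.eq_or_lt.imp (fun heq => eq_of_pexpF_comp_col hT hcard (mem_colGroup.mp hσ) ?_) id
  calc ⇑(pexpF n (entryFun M') T) ∘ σ.symm
      = (pexpF n (entryFun M') T ∘ τ.symm) ∘ σ.symm := by rw [hfix heq]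
    _ = pexpF n (entryFun M) T := hστ

theorem stmt12_general (n d : ℕ) (lam : YoungDiagram) (hcard : lam.card = n)
    (T : Fin n → ℕ × ℕ) (hT : IsTabloid n lam T) :
    LinearIndependent ℚ
      (fun M : {M : SemistandardYoungTableau lam // entrySum M = d} => FMT n M.1 T) :=
  linearIndependent_of_triangular _ (fun M => lcoeff ℚ (pexpF n (entryFun M.1) T))
    (fun M => tailDeg T (pexpF n (entryFun M.1) T))
    (fun M => by simp [coeff_FMT_self hT M.1])
    (fun _ _ h => (eq_or_tailDeg_lt_of_coeff_FMT_ne_zero hT hcard h).imp Subtype.ext id)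

theorem stmt12 (n d : ℕ) (hn : 1 ≤ n) (lam : YoungDiagram) (hcard : lam.card = n)
    (T : Fin n → ℕ × ℕ) (hT : IsTabloid n lam T) :
    LinearIndependent ℚ
      (fun M : {M : SemistandardYoungTableau lam // entrySum M = d} => FMT n M.1 T) :=
  stmt12_general n d lam hcard T hT
end GHS
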